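/- The log-generalized-robustness D_max(ρ) = log(1 + R_G(ρ)) is subadditive under tensor products when the free set is closed under tensor products: D_max(ρ⊗ρ') ≤ D_max(ρ) + D_max(ρ'). -/

import Mathlib

/-! Write a robustness witness as an unnormalised positive part: `λ` is feasible for `ρ` iff
`(ρ + P)/(1 + λ)` is free for some `P ⪰ 0` of trace `λ`. Given such `P, P'` for `ρ, ρ'`, the
product of the two free states is `(ρ ⊗ ρ' + Q)/((1 + λ)(1 + λ'))` with
`Q = P ⊗ ρ' + ρ ⊗ P' + P ⊗ P' ⪰ 0` of trace `(1 + λ)(1 + λ') - 1`. Hence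
`1 + R_G(ρ ⊗ ρ') ≤ (1 + R_G(ρ))(1 + R_G(ρ'))`, and taking logarithms gives subadditivity. -/

open Matrix
open scoped ComplexOrder Kronecker

/-- A density matrix: positive semidefinite with unit trace. -/
def IsDensity {n : Type*} [Fintype n] (ρ : Matrix n n ℂ) : Prop :=
  ρ.PosSemidef ∧ ρ.trace = 1

/-- The feasible set for the generalized robustness of `ρ` with respect to the free set `F`. -/
def RGset {n : Type*} [Fintype n] (F : Set (Matrix n n ℂ)) (ρ : Matrix n n ℂ) : Set ℝ :=
  {l : ℝ | 0 ≤ l ∧ ∃ τ : Matrix n n ℂ, IsDensity τ ∧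
    ((1 / (1 + l) : ℝ) • ρ + (l / (1 + l) : ℝ) • τ) ∈ F}

/-- Generalized robustness `R_G(ρ) = inf{λ ≥ 0 : ∃ density τ, (ρ + λτ)/(1+λ) ∈ F}`. -/
noncomputable def RG {n : Type*} [Fintype n] (F : Set (Matrix n n ℂ)) (ρ : Matrix n n ℂ) : ℝ :=
  sInf (RGset F ρ)

/-- Log generalized robustness `D_max(ρ) = log₂(1 + R_G(ρ))`. -/
noncomputable def DmaxR {n : Type*} [Fintype n] (F : Set (Matrix n n ℂ))
    (ρ : Matrix n n ℂ) : ℝ :=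
  Real.logb 2 (1 + RG F ρ)

theorem IsDensity.kronecker {n m : Type*} [Fintype n] [Fintype m]
    {ρ : Matrix n n ℂ} {σ : Matrix m m ℂ} (hρ : IsDensity ρ) (hσ : IsDensity σ) :
    IsDensity (ρ ⊗ₖ σ) :=
  ⟨hρ.1.kronecker hσ.1, by rw [trace_kronecker, hρ.2, hσ.2, one_mul]⟩

theorem mem_RGset_iff {n : Type*} [Fintype n] {F : Set (Matrix n n ℂ)} {ρ : Matrix n n ℂ}
    (hρ : IsDensity ρ) {l : ℝ} :
    l ∈ RGset F ρ ↔ 0 ≤ l ∧ ∃ P : Matrix n n ℂ, P.PosSemidef ∧ P.trace = l ∧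
      (1 + l)⁻¹ • (ρ + P) ∈ F := by
  constructor
  · rintro ⟨hl, τ, hτ, hF⟩
    refine ⟨hl, l • τ, hτ.1.smul hl, by simp [trace_smul, hτ.2], ?_⟩
    convert hF using 1
    rw [smul_add, smul_smul, one_div, div_eq_inv_mul]
  · rintro ⟨hl, P, hP, htr, hF⟩
    refine ⟨hl, ?_⟩
    rcases hl.eq_or_lt with rfl | hl
    · obtain rfl : P = 0 := hP.trace_eq_zero_iff.1 (by simpa using htr)
      exact ⟨ρ, hρ, by simpa using hF⟩
    · refine ⟨l⁻¹ • P, ⟨hP.smul (inv_nonneg.2 hl.le), by simp [trace_smul, htr, hl.ne']⟩, ?_⟩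
      convert hF using 1
      rw [smul_add, smul_smul, one_div]
      congr 2
      field_simp

theorem RG_nonneg {n : Type*} [Fintype n] (F : Set (Matrix n n ℂ)) (ρ : Matrix n n ℂ) :
    0 ≤ RG F ρ :=
  Real.sInf_nonneg fun _ hl => hl.1

theorem RG_le_of_mem_RGset {n : Type*} [Fintype n] {F : Set (Matrix n n ℂ)} {ρ : Matrix n n ℂ}
    {l : ℝ} (hl : l ∈ RGset F ρ) : RG F ρ ≤ l :=
  csInf_le ⟨0, fun _ hx => hx.1⟩ hl

theorem DmaxR_le_of_mem_RGset {n : Type*} [Fintype n] {F : Set (Matrix n n ℂ)}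
    {ρ : Matrix n n ℂ} {l : ℝ} (hl : l ∈ RGset F ρ) : DmaxR F ρ ≤ Real.logb 2 (1 + l) :=
  Real.logb_le_logb_of_le one_lt_two (by linarith [RG_nonneg F ρ])
    (by linarith [RG_le_of_mem_RGset hl])

theorem mul_sub_one_mem_RGset_kronecker {nA nB : Type*} [Fintype nA] [Fintype nB]
    {FA : Set (Matrix nA nA ℂ)} {FB : Set (Matrix nB nB ℂ)}
    {FAB : Set (Matrix (nA × nB) (nA × nB) ℂ)}
    (htensor : ∀ σ ∈ FA, ∀ σ' ∈ FB, σ ⊗ₖ σ' ∈ FAB)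
    {ρ : Matrix nA nA ℂ} {ρ' : Matrix nB nB ℂ} (hρ : IsDensity ρ) (hρ' : IsDensity ρ')
    {l l' : ℝ} (hl : l ∈ RGset FA ρ) (hl' : l' ∈ RGset FB ρ') :
    (1 + l) * (1 + l') - 1 ∈ RGset FAB (ρ ⊗ₖ ρ') := by
  obtain ⟨hl0, P, hP, htr, hF⟩ := (mem_RGset_iff hρ).1 hl
  obtain ⟨hl0', P', hP', htr', hF'⟩ := (mem_RGset_iff hρ').1 hl'
  refine (mem_RGset_iff (hρ.kronecker hρ')).2
    ⟨by nlinarith, P ⊗ₖ ρ' + ρ ⊗ₖ P' + P ⊗ₖ P',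
      ((hP.kronecker hρ'.1).add (hρ.1.kronecker hP')).add (hP.kronecker hP'), ?_, ?_⟩
  · simp only [trace_add, trace_kronecker, htr, htr', hρ.2, hρ'.2]
    push_cast
    ring
  · have hsum : ρ ⊗ₖ ρ' + (P ⊗ₖ ρ' + ρ ⊗ₖ P' + P ⊗ₖ P') = (ρ + P) ⊗ₖ (ρ' + P') := by
      simp only [add_kronecker, kronecker_add]
      abel
    convert htensor _ hF _ hF' using 1
    rw [add_sub_cancel, hsum, smul_kronecker, kronecker_smul, smul_smul, mul_inv, mul_comm]

theorem Dmax_subadditive_general {nA nB : Type*} [Fintype nA] [Fintype nB]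
    (FA : Set (Matrix nA nA ℂ)) (FB : Set (Matrix nB nB ℂ))
    (FAB : Set (Matrix (nA × nB) (nA × nB) ℂ))
    (htensor : ∀ σ ∈ FA, ∀ σ' ∈ FB, σ ⊗ₖ σ' ∈ FAB)
    (ρ : Matrix nA nA ℂ) (ρ' : Matrix nB nB ℂ) (hρ : IsDensity ρ) (hρ' : IsDensity ρ')
    (hatt : RG FA ρ ∈ RGset FA ρ) (hatt' : RG FB ρ' ∈ RGset FB ρ') :
    DmaxR FAB (ρ ⊗ₖ ρ') ≤ DmaxR FA ρ + DmaxR FB ρ' := by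
  have h := DmaxR_le_of_mem_RGset (mul_sub_one_mem_RGset_kronecker htensor hρ hρ' hatt hatt')
  rwa [add_sub_cancel, Real.logb_mul (by linarith [RG_nonneg FA ρ])
    (by linarith [RG_nonneg FB ρ'])] at h

/-- subadditivity of `D_max` under tensor products, when the free sets are
closed under tensor products and the robustness infima of `ρ` and `ρ'` are attained. -/
theorem Dmax_subadditive {nA nB : Type*} [Fintype nA] [DecidableEq nA] [Fintype nB]
    [DecidableEq nB]
    (FA : Set (Matrix nA nA ℂ)) (FB : Set (Matrix nB nB ℂ))
    (FAB : Set (Matrix (nA × nB) (nA × nB) ℂ))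
    (hFAcc : IsClosed FA ∧ Convex ℝ FA) (hFBcc : IsClosed FB ∧ Convex ℝ FB)
    (hFABcc : IsClosed FAB ∧ Convex ℝ FAB)
    (htensor : ∀ σ ∈ FA, ∀ σ' ∈ FB, σ ⊗ₖ σ' ∈ FAB)
    (ρ : Matrix nA nA ℂ) (ρ' : Matrix nB nB ℂ) (hρ : IsDensity ρ) (hρ' : IsDensity ρ')
    (hatt : RG FA ρ ∈ RGset FA ρ) (hatt' : RG FB ρ' ∈ RGset FB ρ') :
    DmaxR FAB (ρ ⊗ₖ ρ') ≤ DmaxR FA ρ + DmaxR FB ρ' :=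
  Dmax_subadditive_general FA FB FAB htensor ρ ρ' hρ hρ' hatt hatt'
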